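/- arXiv:1111.0986 — 6 statements merged into one kernel-verified Lean document; each statement's English description precedes it below -/
import Mathlib

section
/- For every integer m ≥ 2, the sum ∑_{j=1}^{m-2} C_{j+1}(C_{m-j+1} - C_{m-j}) + ∑_{j=2}^{m-1} (C_{j+1} - C_j) C_{m-j+1} equals 4(m-2)(2m+3)! / ((m+1)!(m+4)!), where C_n denotes the n-th Catalan number. -/
/-- `w` is an alternating (up-down) permutation: `w 0 < w 1 > w 2 < ⋯`. -/
def UpDown {n : ℕ} (w : Equiv.Perm (Fin n)) : Prop :=
  ∀ i : ℕ, ∀ h : i + 1 < n,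
    if i % 2 = 0 then w ⟨i, Nat.lt_of_succ_lt h⟩ < w ⟨i + 1, h⟩
    else w ⟨i + 1, h⟩ < w ⟨i, Nat.lt_of_succ_lt h⟩

/-- `w` is a reverse-alternating (down-up) permutation: `w 0 > w 1 < w 2 > ⋯`. -/
def DownUp {n : ℕ} (w : Equiv.Perm (Fin n)) : Prop :=
  ∀ i : ℕ, ∀ h : i + 1 < n,
    if i % 2 = 0 then w ⟨i + 1, h⟩ < w ⟨i, Nat.lt_of_succ_lt h⟩
    else w ⟨i, Nat.lt_of_succ_lt h⟩ < w ⟨i + 1, h⟩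

/-- The set of occurrences of the pattern 321 in `w`. -/
def occ321 {n : ℕ} (w : Equiv.Perm (Fin n)) : Set (Fin n × Fin n × Fin n) :=
  {t | t.1 < t.2.1 ∧ t.2.1 < t.2.2 ∧ w t.2.2 < w t.2.1 ∧ w t.2.1 < w t.1}

/-- The set of occurrences of the pattern 123 in `w`. -/
def occ123 {n : ℕ} (w : Equiv.Perm (Fin n)) : Set (Fin n × Fin n × Fin n) :=
  {t | t.1 < t.2.1 ∧ t.2.1 < t.2.2 ∧ w t.1 < w t.2.1 ∧ w t.2.1 < w t.2.2}

/-!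
Writing `m = k + 2` and reindexing, each of the two sums splits into products `C_a C_b` with
`a + b` fixed, i.e. into Catalan convolutions `∑ C_i C_{n-i} = C_{n+1}` with a few boundary
terms removed. This evaluates the left-hand sum to `2 C_{m+3} - 6 C_{m+2}`, and the closed form
`C_n = (2n)! / ((n+1)! n!)` turns that into the stated quotient of factorials.
-/

open Finset Nat

theorem catalan_le_catalan_succ (n : ℕ) : catalan n ≤ catalan (n + 1) := by
  rw [catalan_succ', Nat.sum_antidiagonal_eq_sum_range_succ_mk, sum_range_succ']
  simp

theorem catalan_mul_factorial_mul_factorial (n : ℕ) :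
    catalan n * (n + 1)! * n ! = (2 * n)! := by
  have h := choose_mul_factorial_mul_factorial (by omega : n ≤ 2 * n)
  rw [show 2 * n - n = n by omega, ← centralBinom_eq_two_mul_choose,
    ← succ_mul_catalan_eq_centralBinom] at h
  rw [← h, factorial_succ]
  ring

/-- The Catalan convolution `C_{n+4} = ∑ C_i C_{n+3-i}` with the four outermost terms split off. -/
theorem sum_range_catalan_mul_catalan_add (n : ℕ) :
    ∑ i ∈ range n, catalan (i + 2) * catalan (n + 1 - i) + 2 * catalan (n + 3) +
      2 * catalan (n + 2) = catalan (n + 4) := by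
  rw [catalan_succ' (n + 3), Nat.sum_antidiagonal_eq_sum_range_succ_mk, sum_range_succ',
    sum_range_succ', sum_range_succ, sum_range_succ]
  have hterm : ∀ i ∈ range n, catalan (i + 2) * catalan (n + 1 - i) =
      catalan (i + 1 + 1) * catalan (n + 3 - (i + 1 + 1)) := by
    intro i _
    congr 2
    omega
  rw [sum_congr rfl hterm]
  simp only [reduceSubDiff, show n + 3 - (n + 1 + 1) = 1 by omega, catalan_one, mul_one, tsub_self,
    catalan_zero, zero_add, Nat.add_one_sub_one, one_mul, tsub_zero]
  ring

theorem sum_catalan_differences_add_six_mul (m : ℕ) (hm : 2 ≤ m) :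
    (∑ j ∈ Icc 1 (m - 2), catalan (j + 1) * (catalan (m - j + 1) - catalan (m - j))) +
        ∑ j ∈ Icc 2 (m - 1), (catalan (j + 1) - catalan j) * catalan (m - j + 1) +
      6 * catalan (m + 2) = 2 * catalan (m + 3) := by
  obtain ⟨k, rfl⟩ := Nat.exists_eq_add_of_le' hm
  have hconv := sum_range_catalan_mul_catalan_add k
  have hconv_succ := sum_range_catalan_mul_catalan_add (k + 1)
  -- Peeling the top and the bottom term of the `k + 1` convolution gives the two reindexed sums.
  have hconv_succ' := hconv_succ
  rw [sum_range_succ] at hconv_succ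
  rw [sum_range_succ'] at hconv_succ'
  simp only [Nat.add_sub_add_right, Nat.sub_zero] at hconv_succ'
  have hterm : ∀ x ∈ range k,
      (catalan (1 + x + 1) : ℤ) * (catalan (k + 2 - (1 + x) + 1) - catalan (k + 2 - (1 + x))) +
        (catalan (2 + x + 1) - catalan (2 + x)) * catalan (k + 2 - (2 + x) + 1) =
      catalan (x + 2) * catalan (k + 1 + 1 - x) + catalan (x + 1 + 2) * catalan (k + 1 - x) -
        2 * (catalan (x + 2) * catalan (k + 1 - x) : ℤ) := by
    intro x hx
    rw [mem_range] at hx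
    rw [show k + 2 - (1 + x) + 1 = k + 1 + 1 - x by omega, show k + 2 - (1 + x) = k + 1 - x by omega,
      show k + 2 - (2 + x) + 1 = k + 1 - x by omega, show 2 + x + 1 = x + 1 + 2 by omega,
      show 1 + x + 1 = x + 2 by omega, show 2 + x = x + 2 by omega]
    ring
  rw [show k + 2 - 2 = k by omega, show k + 2 - 1 = k + 1 by omega, ← Ico_add_one_right_eq_Icc,
    ← Ico_add_one_right_eq_Icc, sum_Ico_eq_sum_range, sum_Ico_eq_sum_range,
    show k + 1 - 1 = k by omega, show k + 1 + 1 - 2 = k by omega]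
  zify [catalan_le_catalan_succ] at hconv hconv_succ hconv_succ' ⊢
  rw [← sum_add_distrib, sum_congr rfl hterm, sum_sub_distrib, sum_add_distrib, ← mul_sum]
  simp only [add_assoc, Nat.reduceAdd, catalan_two, Nat.cast_ofNat, show k + 2 - k = 2 by omega]
    at hconv hconv_succ hconv_succ' ⊢
  linarith

theorem two_mul_catalan_sub_six_mul_catalan_mul_factorial (n : ℕ) :
    (2 * catalan (n + 3) - 6 * catalan (n + 2) : ℤ) * ((n + 1)! * (n + 4)!) =
      4 * (n - 2) * (2 * n + 3)! := by
  have h3 := catalan_mul_factorial_mul_factorial (n + 3)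
  have h2 := catalan_mul_factorial_mul_factorial (n + 2)
  rw [show 2 * (n + 3) = 2 * n + 3 + 1 + 1 + 1 by ring] at h3
  rw [show 2 * (n + 2) = 2 * n + 3 + 1 by ring] at h2
  simp only [factorial_succ (n + 3), factorial_succ (n + 2), factorial_succ (n + 1),
    factorial_succ (2 * n + 3 + 1 + 1), factorial_succ (2 * n + 3 + 1), factorial_succ (2 * n + 3)]
    at h2 h3 ⊢
  apply mul_right_cancel₀ (show ((n + 2) * (n + 3) : ℤ) ≠ 0 by positivity)
  zify at h2 h3
  push_cast
  linear_combination 2 * h3 - 6 * (n + 4) * (n + 3) * h2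

theorem stmt0 (m : ℕ) (hm : 2 ≤ m) :
    ((∑ j ∈ Finset.Icc 1 (m - 2), catalan (j + 1) * (catalan (m - j + 1) - catalan (m - j))) +
        ∑ j ∈ Finset.Icc 2 (m - 1), (catalan (j + 1) - catalan j) * catalan (m - j + 1)) *
        (Nat.factorial (m + 1) * Nat.factorial (m + 4)) =
      4 * (m - 2) * Nat.factorial (2 * m + 3) := by
  have hsum := sum_catalan_differences_add_six_mul m hm
  have hle : 6 * catalan (m + 2) ≤ 2 * catalan (m + 3) := hsum ▸ Nat.le_add_left _ _
  rw [Nat.eq_sub_of_add_eq hsum]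
  zify [hm, hle]
  exact two_mul_catalan_sub_six_mul_catalan_mul_factorial m
end

section
/- For every integer m ≥ 1, the sum ∑_{j=1}^{m-1} C_{j+1}(C_{m-j+1} - C_{m-j}) + ∑_{j=2}^{m} (C_{j+1} - C_j) C_{m-j+1} equals 3(3m+4)(m-1)(2m+2)! / ((m+1)!(m+4)!), where C_n is the n-th Catalan number. -/
/-!
Splitting the differences, the left-hand side is a signed combination of four partial
convolutions `∑ C_{i+a} C_{l+b}` over `i + l = m - 2`. Each is the full convolution
`∑_{i+l=n} C_i C_l = C_{n+1}` minus its first `a` and last `b` terms, so the left-hand side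
collapses to `2 C_{m+3} - 6 C_{m+2} + C_{m+1}`. The ratio `(n+2) C_{n+1} = 2(2n+1) C_n` and
`C_n (n+1)! n! = (2n)!` turn this into the stated closed form.
-/

open Finset Nat

theorem succ_succ_mul_catalan_succ (n : ℕ) :
    (n + 2) * catalan (n + 1) = 2 * (2 * n + 1) * catalan n := by
  have h := succ_mul_centralBinom_succ n
  rw [← succ_mul_catalan_eq_centralBinom, ← succ_mul_catalan_eq_centralBinom] at h
  apply Nat.eq_of_mul_eq_mul_left n.succ_pos
  linarith

theorem sum_antidiagonal_catalan_add_mul_catalan_add (a b k : ℕ) :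
    ∑ p ∈ antidiagonal k, catalan (p.1 + a) * catalan (p.2 + b)
      + ∑ i ∈ range a, catalan i * catalan (k + a + b - i)
      + ∑ i ∈ range b, catalan (k + a + b - i) * catalan i
      = catalan (k + a + b + 1) := by
  induction a generalizing k with
  | zero =>
    induction b generalizing k with
    | zero => simpa using (catalan_succ' k).symm
    | succ b ih =>
      have h := ih (k + 1)
      rw [Nat.sum_antidiagonal_succ'] at h
      rw [sum_range_succ, show k + 0 + (b + 1) - b = k + 1 by omega]
      simp only [range_zero, sum_empty, add_zero, zero_add, add_assoc, add_comm, add_left_comm]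
        at h ⊢
      linarith
  | succ a ih =>
    have h := ih (k + 1)
    rw [Nat.sum_antidiagonal_succ] at h
    rw [sum_range_succ, show k + (a + 1) + b - a = k + 1 + b by omega]
    simp only [add_zero, add_assoc, add_comm, add_left_comm] at h ⊢
    linarith

theorem sum_Icc_eq_sum_antidiagonal {M : Type*} [AddCommMonoid M] (f : ℕ → M) (a k : ℕ) :
    ∑ j ∈ Icc a (a + k), f j = ∑ p ∈ antidiagonal k, f (p.1 + a) := by
  rw [Nat.sum_antidiagonal_eq_sum_range_succ_mk, range_eq_Ico, sum_Ico_add', zero_add,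
    ← Ico_add_one_right_eq_Icc]
  congr 2
  omega

theorem sum_catalan_mul_catalan_differences (m : ℕ) (hm : 1 ≤ m) :
    (((∑ j ∈ Icc 1 (m - 1), catalan (j + 1) * (catalan (m - j + 1) - catalan (m - j))) +
        ∑ j ∈ Icc 2 m, (catalan (j + 1) - catalan j) * catalan (m - j + 1) : ℕ) : ℤ)
      = 2 * catalan (m + 3) - 6 * catalan (m + 2) + catalan (m + 1) := by
  obtain rfl | ⟨k, rfl⟩ : m = 1 ∨ ∃ k, m = k + 2 := by
    rcases hm.eq_or_lt with h | h
    exacts [Or.inl h.symm, Or.inr ⟨m - 2, by omega⟩]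
  · simp [catalan_succ', Nat.sum_antidiagonal_succ]
  have first : ((∑ j ∈ Icc 1 (k + 2 - 1),
        catalan (j + 1) * (catalan (k + 2 - j + 1) - catalan (k + 2 - j)) : ℕ) : ℤ)
      = ∑ p ∈ antidiagonal k, ((catalan (p.1 + 2) * catalan (p.2 + 2) : ℤ)
          - catalan (p.1 + 2) * catalan (p.2 + 1)) := by
    rw [show k + 2 - 1 = 1 + k by omega, sum_Icc_eq_sum_antidiagonal, Nat.cast_sum]
    refine sum_congr rfl fun p hp => ?_
    rw [← mem_antidiagonal.mp hp, show p.1 + p.2 + 2 - (p.1 + 1) = p.2 + 1 by omega,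
      Nat.cast_mul, Nat.cast_sub (catalan_le_catalan_succ _)]
    ring
  have second : ((∑ j ∈ Icc 2 (k + 2),
        (catalan (j + 1) - catalan j) * catalan (k + 2 - j + 1) : ℕ) : ℤ)
      = ∑ p ∈ antidiagonal k, ((catalan (p.1 + 3) * catalan (p.2 + 1) : ℤ)
          - catalan (p.1 + 2) * catalan (p.2 + 1)) := by
    rw [add_comm k, sum_Icc_eq_sum_antidiagonal, Nat.cast_sum]
    refine sum_congr rfl fun p hp => ?_
    rw [← mem_antidiagonal.mp hp, show 2 + (p.1 + p.2) - (p.1 + 2) = p.2 by omega,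
      Nat.cast_mul, Nat.cast_sub (catalan_le_catalan_succ _)]
    ring
  have conv₂₂ := sum_antidiagonal_catalan_add_mul_catalan_add 2 2 k
  have conv₂₁ := sum_antidiagonal_catalan_add_mul_catalan_add 2 1 k
  have conv₃₁ := sum_antidiagonal_catalan_add_mul_catalan_add 3 1 k
  simp only [sum_range_succ, range_one, sum_singleton, add_assoc, Nat.reduceAdd, tsub_zero,
    Nat.add_one_sub_one, Nat.reduceSubDiff, catalan_zero, catalan_one, catalan_two, one_mul, mul_one]
    at conv₂₂ conv₂₁ conv₃₁
  zify at conv₂₂ conv₂₁ conv₃₁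
  rw [Nat.cast_add, first, second, sum_sub_distrib, sum_sub_distrib]
  simp only [add_assoc, Nat.reduceAdd]
  linarith

theorem catalan_combination_mul_factorial (m : ℕ) :
    (2 * catalan (m + 3) - 6 * catalan (m + 2) + catalan (m + 1) : ℤ) * ((m + 1)! * (m + 4)!)
      = 3 * (3 * m + 4) * (m - 1) * (2 * m + 2)! := by
  have ratio₁ : ((m + 3) * catalan (m + 2) : ℤ) = 2 * (2 * m + 3) * catalan (m + 1) := by
    exact_mod_cast succ_succ_mul_catalan_succ (m + 1)
  have ratio₂ : ((m + 4) * catalan (m + 3) : ℤ) = 2 * (2 * m + 5) * catalan (m + 2) := by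
    exact_mod_cast succ_succ_mul_catalan_succ (m + 2)
  have closed : (catalan (m + 1) * (m + 2)! * (m + 1)! : ℤ) = (2 * m + 2)! := by
    exact_mod_cast catalan_mul_factorial_mul_factorial (m + 1)
  have factorial_add_four : ((m + 4)! : ℤ) = (m + 4) * (m + 3) * (m + 2)! := by
    push_cast [factorial_succ]
    ring
  rw [factorial_add_four, ← closed]
  linear_combination (2 * (m + 3) * (m + 1)! * (m + 2)!) * ratio₂
    + ((4 * (2 * m + 5) - 6 * (m + 4)) * (m + 1)! * (m + 2)!) * ratio₁

theorem stmt1 (m : ℕ) (hm : 1 ≤ m) :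
    ((∑ j ∈ Finset.Icc 1 (m - 1), catalan (j + 1) * (catalan (m - j + 1) - catalan (m - j))) +
        ∑ j ∈ Finset.Icc 2 m, (catalan (j + 1) - catalan j) * catalan (m - j + 1)) *
        (Nat.factorial (m + 1) * Nat.factorial (m + 4)) =
      3 * (3 * m + 4) * (m - 1) * Nat.factorial (2 * m + 2) := by
  rw [← Nat.cast_inj (R := ℤ), Nat.cast_mul, sum_catalan_mul_catalan_differences m hm]
  push_cast [Nat.cast_sub hm]
  exact catalan_combination_mul_factorial m
end

section
/- For every ℓ ≥ 0, the number of 321-avoiding reverse-alternating (down-up) permutations of length 2ℓ is the Catalan number C_ℓ. -/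
open Finset DyckStep

variable {n : ℕ}

def ParityStrictMono (w : Equiv.Perm (Fin n)) : Prop :=
  ∀ i j : Fin n, i < j → i.val % 2 = j.val % 2 → w i < w j

theorem ParityStrictMono.lt_iff_lt {w : Equiv.Perm (Fin n)} (hm : ParityStrictMono w)
    {i j : Fin n} (hij : i.val % 2 = j.val % 2) : w i < w j ↔ i < j := by
  refine ⟨fun h => ?_, fun h => hm i j h hij⟩
  by_contra! hji
  rcases hji.lt_or_eq with hji | rfl
  · exact (hm j i hji hij.symm).not_gt h
  · exact h.false

namespace DownUp

variable {w : Equiv.Perm (Fin n)}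

theorem apply_lt_apply_of_even (hw : DownUp w) {i j : Fin n} (hij : j.val = i.val + 1)
    (hi : i.val % 2 = 0) : w j < w i := by
  have := hw i (hij ▸ j.isLt)
  simp only [hi, if_true] at this
  convert this

theorem apply_lt_apply_of_odd (hw : DownUp w) {i j : Fin n} (hij : j.val = i.val + 1)
    (hi : i.val % 2 = 1) : w i < w j := by
  have := hw i (hij ▸ j.isLt)
  simp only [hi, one_ne_zero, if_false] at this
  convert this

theorem mod_two_of_lt_of_apply_lt (hw : DownUp w) (hm : ParityStrictMono w) {x y : Fin n}
    (hxy : x < y) (hyx : w y < w x) : x.val % 2 = 0 ∧ y.val % 2 = 1 := by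
  have hpar : x.val % 2 ≠ y.val % 2 := fun h => (hm x y hxy h).not_gt hyx
  suffices hx : x.val % 2 = 0 by omega
  by_contra hx
  let x' : Fin n := ⟨x.val + 1, by have := y.isLt; omega⟩
  have hx'y : w x' ≤ w y := by
    rcases (show x' ≤ y from Fin.mk_le_of_le_val hxy).lt_or_eq with h | h
    · exact (hm x' y h (show (x.val + 1) % 2 = y.val % 2 by omega)).le
    · rw [h]
  exact (hw.apply_lt_apply_of_odd rfl (by omega)).not_ge (hx'y.trans hyx.le)

end DownUp

theorem occ321_eq_empty_iff_parityStrictMono {l : ℕ} {w : Equiv.Perm (Fin (2 * l))}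
    (hw : DownUp w) : occ321 w = ∅ ↔ ParityStrictMono w := by
  rw [Set.eq_empty_iff_forall_notMem]
  constructor
  · intro havoid i j hij hpar
    by_contra! hji
    replace hji : w j < w i := hji.lt_of_ne (w.injective.ne hij.ne')
    rcases Nat.mod_two_eq_zero_or_one j.val with hj | hj
    · let k : Fin (2 * l) := ⟨j.val + 1, by have := j.isLt; omega⟩
      exact havoid (i, j, k) ⟨hij, Fin.lt_def.mpr (Nat.lt_succ_self _),
        hw.apply_lt_apply_of_even rfl hj, hji⟩
    · let i' : Fin (2 * l) := ⟨i.val - 1, by have := i.isLt; omega⟩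
      exact havoid (i', i, j) ⟨Fin.lt_def.mpr (show i.val - 1 < i.val by omega), hij, hji,
        hw.apply_lt_apply_of_even (show i.val = i.val - 1 + 1 by omega)
          (show (i.val - 1) % 2 = 0 by omega)⟩
  · rintro hm ⟨i, j, k⟩ ⟨hij, hjk, hkj, hji⟩
    have := (hw.mod_two_of_lt_of_apply_lt hm hij hji).2
    have := (hw.mod_two_of_lt_of_apply_lt hm hjk hkj).1
    omega

def IsBallot (f : Fin n → DyckStep) : Prop :=
  (∀ t, #{v | v.val < t ∧ f v = D} ≤ #{v | v.val < t ∧ f v = U}) ∧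
    #{v | f v = U} = #{v | f v = D}

def stepRank (f : Fin n → DyckStep) (v : Fin n) : ℕ := #{u | u < v ∧ f u = f v}

/-- The position that the value `v` takes in the permutation encoded by `f`: the `k`-th down-step
goes to position `2k` and the `k`-th up-step to position `2k + 1`. -/
def stepLabel (f : Fin n → DyckStep) (v : Fin n) : ℕ :=
  2 * stepRank f v + if f v = D then 0 else 1

section StepLabel

variable {f : Fin n → DyckStep}

theorem stepRank_lt_stepRank {u v : Fin n} (huv : u < v) (h : f u = f v) :
    stepRank f u < stepRank f v := by
  refine card_lt_card ⟨fun x hx => ?_, fun hsub => ?_⟩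
  · simp only [mem_filter, mem_univ, true_and] at hx ⊢
    exact ⟨hx.1.trans huv, hx.2.trans h⟩
  · simpa using hsub (by simpa using ⟨huv, h⟩ : u ∈ ({x | x < v ∧ f x = f v} : Finset _))

theorem stepRank_lt_card (v : Fin n) : stepRank f v < #{u | f u = f v} := by
  refine card_lt_card ⟨fun x hx => ?_, fun hsub => ?_⟩
  · simp only [mem_filter, mem_univ, true_and] at hx ⊢
    exact hx.2
  · simpa using hsub (by simp : v ∈ ({x | f x = f v} : Finset _))

theorem stepLabel_eq_iff {v : Fin n} {i : ℕ} :
    stepLabel f v = i ↔ stepRank f v = i / 2 ∧ (f v = D ↔ i % 2 = 0) := by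
  unfold stepLabel
  split_ifs with h <;> simp only [h, true_iff, false_iff] <;> omega

theorem stepLabel_injective (f : Fin n → DyckStep) : Function.Injective (stepLabel f) := by
  intro u v huv
  obtain ⟨hrank_u, hstep_u⟩ := stepLabel_eq_iff.mp huv
  obtain ⟨hrank_v, hstep_v⟩ := stepLabel_eq_iff.mp (rfl : stepLabel f v = _)
  have hsame : f u = f v := by
    rcases (f u).dichotomy with hu | hu <;> rcases (f v).dichotomy with hv | hv <;> simp_all
  rcases lt_trichotomy u v with h | h | h
  · exact absurd (hrank_u.trans hrank_v.symm) (stepRank_lt_stepRank h hsame).ne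
  · exact h
  · exact absurd (hrank_v.trans hrank_u.symm) (stepRank_lt_stepRank h hsame.symm).ne

end StepLabel

namespace IsBallot

variable {l : ℕ} {f : Fin (2 * l) → DyckStep}

theorem card_filter_eq (hf : IsBallot f) (s : DyckStep) : #{v | f v = s} = l := by
  have htotal : #{v | f v = D} + #{v | ¬f v = D} = 2 * l := by
    rw [card_filter_add_card_filter_not, card_univ, Fintype.card_fin]
  have hU : #{v | ¬f v = D} = #{v | f v = U} := by
    congr 1
    ext v
    rcases (f v).dichotomy with h | h <;> simp [h]
  rw [hU] at htotal
  have := hf.2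
  rcases s.dichotomy with rfl | rfl <;> omega

theorem stepLabel_lt (hf : IsBallot f) (v : Fin (2 * l)) : stepLabel f v < 2 * l := by
  have := stepRank_lt_card (f := f) v
  rw [hf.card_filter_eq] at this
  unfold stepLabel
  split_ifs <;> omega

theorem lt_of_stepRank_le (hf : IsBallot f) {u v : Fin (2 * l)} (hu : f u = U) (hv : f v = D)
    (h : stepRank f u ≤ stepRank f v) : u < v := by
  by_contra! hvu
  replace hvu : v < u := hvu.lt_of_ne (by rintro rfl; simp_all)
  have hD : stepRank f v < #{x | x.val < v.val + 1 ∧ f x = D} := by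
    refine card_lt_card ⟨fun x hx => ?_, fun hsub => ?_⟩
    · simp only [mem_filter, mem_univ, true_and, hv] at hx ⊢
      exact ⟨by have := Fin.lt_def.mp hx.1; omega, hx.2⟩
    · simpa using hsub (by simpa using hv : v ∈ ({x | x.val < v.val + 1 ∧ f x = D} : Finset _))
  have hU : #{x | x.val < v.val + 1 ∧ f x = U} ≤ stepRank f u := by
    refine card_le_card fun x hx => ?_
    simp only [mem_filter, mem_univ, true_and, hu] at hx ⊢
    exact ⟨Fin.lt_def.mpr (by have := Fin.lt_def.mp hvu; omega), hx.2⟩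
  have := hf.1 (v.val + 1)
  omega

noncomputable def toPerm (hf : IsBallot f) : Equiv.Perm (Fin (2 * l)) :=
  (Equiv.ofBijective (fun v => (⟨stepLabel f v, hf.stepLabel_lt v⟩ : Fin (2 * l))) <|
    Finite.injective_iff_bijective.mp fun _ _ h => stepLabel_injective f (Fin.mk.inj_iff.mp h)).symm

theorem val_toPerm_symm_apply (hf : IsBallot f) (v : Fin (2 * l)) :
    (hf.toPerm.symm v).val = stepLabel f v :=
  rfl

theorem stepLabel_toPerm (hf : IsBallot f) (i : Fin (2 * l)) : stepLabel f (hf.toPerm i) = i := by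
  rw [← val_toPerm_symm_apply hf, Equiv.symm_apply_apply]

theorem stepRank_toPerm (hf : IsBallot f) (i : Fin (2 * l)) : stepRank f (hf.toPerm i) = i / 2 :=
  (stepLabel_eq_iff.mp (hf.stepLabel_toPerm i)).1

theorem apply_toPerm_eq_D_iff (hf : IsBallot f) (i : Fin (2 * l)) :
    f (hf.toPerm i) = D ↔ i.val % 2 = 0 :=
  (stepLabel_eq_iff.mp (hf.stepLabel_toPerm i)).2

theorem parityStrictMono_toPerm (hf : IsBallot f) : ParityStrictMono hf.toPerm := by
  intro i j hij hpar
  have hsame : f (hf.toPerm j) = f (hf.toPerm i) := by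
    have hi := hf.apply_toPerm_eq_D_iff i
    have hj := hf.apply_toPerm_eq_D_iff j
    rcases (f (hf.toPerm i)).dichotomy with h | h <;>
      rcases (f (hf.toPerm j)).dichotomy with h' | h' <;> simp_all
  by_contra! hji
  have := stepRank_lt_stepRank (hji.lt_of_ne (hf.toPerm.injective.ne hij.ne')) hsame
  rw [hf.stepRank_toPerm, hf.stepRank_toPerm] at this
  have := Fin.lt_def.mp hij
  omega

theorem downUp_toPerm (hf : IsBallot f) : DownUp hf.toPerm := by
  intro i hi
  have ha : f (hf.toPerm ⟨i, Nat.lt_of_succ_lt hi⟩) = D ↔ i % 2 = 0 :=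
    hf.apply_toPerm_eq_D_iff _
  have hb : f (hf.toPerm ⟨i + 1, hi⟩) = D ↔ (i + 1) % 2 = 0 := hf.apply_toPerm_eq_D_iff _
  have hra : stepRank f (hf.toPerm ⟨i, Nat.lt_of_succ_lt hi⟩) = i / 2 := hf.stepRank_toPerm _
  have hrb : stepRank f (hf.toPerm ⟨i + 1, hi⟩) = (i + 1) / 2 := hf.stepRank_toPerm _
  split_ifs with hpar
  · refine hf.lt_of_stepRank_le ?_ (ha.mpr hpar) (by omega)
    exact (DyckStep.dichotomy _).resolve_right (mt hb.mp (by omega))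
  · refine hf.lt_of_stepRank_le ?_ (hb.mpr (by omega)) (by omega)
    exact (DyckStep.dichotomy _).resolve_right (mt ha.mp hpar)

end IsBallot

theorem card_filter_val_lt_mod_two {i : ℕ} (hi : i ≤ n) :
    #{j : Fin n | j.val < i ∧ j.val % 2 = i % 2} = i / 2 := by
  rw [← card_range (i / 2), ← card_map Fin.valEmbedding]
  refine card_nbij' (fun j => j / 2) (fun k => 2 * k + i % 2) ?_ ?_ ?_ ?_ <;>
    intro x hx <;> simp [Fin.exists_iff] at hx ⊢ <;> grind

def peakWord (w : Equiv.Perm (Fin n)) (v : Fin n) : DyckStep :=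
  if (w.symm v).val % 2 = 0 then D else U

section PeakWord

variable {w : Equiv.Perm (Fin n)}

@[simp]
theorem peakWord_apply_apply (i : Fin n) : peakWord w (w i) = if i.val % 2 = 0 then D else U := by
  simp [peakWord]

theorem stepRank_peakWord (hm : ParityStrictMono w) (i : Fin n) :
    stepRank (peakWord w) (w i) = i / 2 := by
  rw [← card_filter_val_lt_mod_two i.isLt.le, stepRank, eq_comm]
  refine card_equiv w fun j => ?_
  have hstep : (if j.val % 2 = 0 then D else U) = (if i.val % 2 = 0 then D else U) ↔
      j.val % 2 = i.val % 2 := by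
    split_ifs <;> simp <;> omega
  simp only [mem_filter, mem_univ, true_and, peakWord_apply_apply, hstep, ← Fin.lt_def]
  exact and_congr_left fun h => (hm.lt_iff_lt h).symm

theorem stepLabel_peakWord (hm : ParityStrictMono w) (v : Fin n) :
    stepLabel (peakWord w) v = w.symm v := by
  obtain ⟨i, rfl⟩ := w.surjective v
  rw [Equiv.symm_apply_apply, stepLabel_eq_iff, peakWord_apply_apply, stepRank_peakWord hm]
  refine ⟨rfl, ?_⟩
  split_ifs <;> simp [*]

theorem card_filter_peakWord_eq (t : ℕ) (s : DyckStep) :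
    #{v | v.val < t ∧ peakWord w v = s} =
      #{i | (w i).val < t ∧ (if i.val % 2 = 0 then D else U) = s} :=
  (card_equiv w fun i => by simp).symm

end PeakWord

theorem isBallot_peakWord {l : ℕ} {w : Equiv.Perm (Fin (2 * l))} (hw : DownUp w) :
    IsBallot (peakWord w) := by
  constructor
  · intro t
    rw [card_filter_peakWord_eq, card_filter_peakWord_eq]
    refine card_le_card_of_surjOn (fun j => ⟨j.val - 1, by omega⟩) fun i hi => ?_
    simp only [coe_filter, mem_univ, true_and, Set.mem_ofPred_eq, ite_eq_left_iff,
      reduceCtorEq, imp_false, not_not] at hi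
    let j : Fin (2 * l) := ⟨i.val + 1, by omega⟩
    refine ⟨j, ?_, Fin.ext (by simp [j])⟩
    simp only [coe_filter, mem_univ, true_and, Set.mem_ofPred_eq, j]
    exact ⟨(Fin.lt_def.mp (hw.apply_lt_apply_of_even rfl hi.2)).trans hi.1, if_neg (by omega)⟩
  · have heven : #{i : Fin (2 * l) | i.val % 2 = 0} = l := by
      simpa using card_filter_val_lt_mod_two (n := 2 * l) le_rfl
    have htotal := card_filter_add_card_filter_not (s := univ) fun i : Fin (2 * l) => i.val % 2 = 0
    have hcount (s : DyckStep) := card_filter_peakWord_eq (w := w) (2 * l) s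
    simp only [Fin.is_lt, true_and] at hcount
    rw [card_univ, Fintype.card_fin] at htotal
    rw [hcount, hcount]
    simp only [ite_eq_right_iff, ite_eq_left_iff, reduceCtorEq, imp_false, not_not]
    omega

theorem IsBallot.peakWord_toPerm {l : ℕ} {f : Fin (2 * l) → DyckStep} (hf : IsBallot f) :
    peakWord hf.toPerm = f := by
  funext v
  obtain ⟨i, rfl⟩ := hf.toPerm.surjective v
  rw [peakWord_apply_apply]
  split_ifs with hi
  · exact ((hf.apply_toPerm_eq_D_iff i).mpr hi).symm
  · exact ((f _).dichotomy.resolve_right (mt (hf.apply_toPerm_eq_D_iff i).mp hi)).symm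

noncomputable def downUpParityStrictMonoEquivBallot (l : ℕ) :
    {w : Equiv.Perm (Fin (2 * l)) // DownUp w ∧ ParityStrictMono w} ≃
      {f : Fin (2 * l) → DyckStep // IsBallot f} where
  toFun w := ⟨peakWord w, isBallot_peakWord w.2.1⟩
  invFun f := ⟨f.2.toPerm, f.2.downUp_toPerm, f.2.parityStrictMono_toPerm⟩
  left_inv w := by
    refine Subtype.ext (Equiv.symm_bijective.injective (Equiv.ext fun v => Fin.ext ?_))
    exact (IsBallot.val_toPerm_symm_apply (isBallot_peakWord w.2.1) v).trans
      (stepLabel_peakWord w.2.2 v)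
  right_inv f := Subtype.ext f.2.peakWord_toPerm

theorem List.count_take_ofFn {α : Type*} [DecidableEq α] (f : Fin n → α) (a : α) (t : ℕ) :
    ((List.ofFn f).take t).count a = #{v | v.val < t ∧ f v = a} := by
  induction n generalizing t with
  | zero => simp
  | succ n ih =>
    cases t with
    | zero => simp
    | succ t =>
      rw [List.ofFn_succ, List.take_succ_cons, List.count_cons, ih, Fin.card_filter_univ_succ']
      simp [add_comm]

theorem List.count_ofFn {α : Type*} [DecidableEq α] (f : Fin n → α) (a : α) :
    (List.ofFn f).count a = #{v | f v = a} := by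
  simpa [List.take_of_length_le (List.length_ofFn (f := f)).le] using List.count_take_ofFn f a n

theorem isBallot_iff_ofFn (f : Fin n → DyckStep) :
    IsBallot f ↔ (∀ t, ((List.ofFn f).take t).count D ≤ ((List.ofFn f).take t).count U) ∧
      (List.ofFn f).count U = (List.ofFn f).count D := by
  simp only [IsBallot, List.count_take_ofFn, List.count_ofFn]

def dyckWordEquivBallot (n : ℕ) :
    {p : DyckWord // p.toList.length = n} ≃ {f : Fin n → DyckStep // IsBallot f} where
  toFun p := ⟨fun v => p.1.toList[v.val], by
    have hp : List.ofFn (fun v : Fin n => p.1.toList[v.val]) = p.1.toList :=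
      List.ext_getElem (by simp [p.2]) (by simp)
    rw [isBallot_iff_ofFn, hp]
    exact ⟨p.1.count_D_le_count_U, p.1.count_U_eq_count_D⟩⟩
  invFun f :=
    ⟨⟨List.ofFn f.1, ((isBallot_iff_ofFn f.1).mp f.2).2, ((isBallot_iff_ofFn f.1).mp f.2).1⟩,
      List.length_ofFn⟩
  left_inv p := Subtype.ext (DyckWord.ext (List.ext_getElem (by simp [p.2]) (by simp)))
  right_inv f := Subtype.ext (funext fun v => by simp)

theorem stmt5 (l : ℕ) :
    Nat.card {w : Equiv.Perm (Fin (2 * l)) // DownUp w ∧ occ321 w = ∅} = catalan l := by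
  calc Nat.card {w : Equiv.Perm (Fin (2 * l)) // DownUp w ∧ occ321 w = ∅}
      = Nat.card {w : Equiv.Perm (Fin (2 * l)) // DownUp w ∧ ParityStrictMono w} :=
        Nat.card_congr <| Equiv.subtypeEquivRight fun _ =>
          and_congr_right occ321_eq_empty_iff_parityStrictMono
    _ = Nat.card {p : DyckWord // p.toList.length = 2 * l} :=
        Nat.card_congr <| (downUpParityStrictMonoEquivBallot l).trans (dyckWordEquivBallot _).symm
    _ = Nat.card {p : DyckWord // p.semilength = l} :=
        Nat.card_congr <| Equiv.subtypeEquivRight fun p => by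
          rw [← p.two_mul_semilength_eq_length]
          omega
    _ = catalan l := by
      rw [Nat.card_eq_fintype_card, DyckWord.card_dyckWord_semilength_eq_catalan]
end

section
/- For every m ≥ 1, the number of alternating permutations of length 2m+1 containing 123 exactly once equals the number of alternating permutations of length 2m+1 containing 321 exactly once. -/
/-!
Reversal `w ↦ w ∘ rev` is an involution on permutations of `Fin n`. It turns occurrences of 321
into occurrences of 123 (reversing the triple of indices), and for odd `n` it maps up-down
permutations to up-down permutations, since the last step of an odd-length up-down word is a
descent. It therefore restricts to a bijection between the two sets being counted.
-/

def Fin.tripleRev {n : ℕ} : (Fin n × Fin n × Fin n) ≃ (Fin n × Fin n × Fin n) where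
  toFun t := (t.2.2.rev, t.2.1.rev, t.1.rev)
  invFun t := (t.2.2.rev, t.2.1.rev, t.1.rev)
  left_inv t := by simp
  right_inv t := by simp

lemma Fin.revPerm_mul_self {n : ℕ} : (Fin.revPerm : Equiv.Perm (Fin n)) * Fin.revPerm = 1 :=
  Equiv.ext Fin.rev_rev

lemma preimage_tripleRev_occ321 {n : ℕ} (w : Equiv.Perm (Fin n)) :
    Fin.tripleRev ⁻¹' occ321 w = occ123 (w * Fin.revPerm) := by
  ext ⟨a, b, c⟩
  simp only [occ321, occ123, Fin.tripleRev, Set.mem_preimage, Equiv.coe_fn_mk,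
    Set.mem_ofPred_eq, Equiv.Perm.mul_apply, Fin.revPerm_apply, Fin.rev_lt_rev]
  tauto

lemma ncard_occ123_mul_revPerm {n : ℕ} (w : Equiv.Perm (Fin n)) :
    (occ123 (w * Fin.revPerm)).ncard = (occ321 w).ncard := by
  rw [← preimage_tripleRev_occ321,
    Set.ncard_preimage_of_injective_subset_range Fin.tripleRev.injective (by simp)]

lemma UpDown.mul_revPerm {n : ℕ} (hn : Odd n) {w : Equiv.Perm (Fin n)} (hw : UpDown w) :
    UpDown (w * Fin.revPerm) := by
  obtain ⟨m, rfl⟩ := hn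
  intro i h
  -- step `i` of `w * rev` is step `2m - (i + 1)` of `w` read backwards, and the two indices
  -- have opposite parity
  have hj : 2 * m - (i + 1) + 1 < 2 * m + 1 := by omega
  have key := hw _ hj
  have e1 : Fin.revPerm (⟨i, Nat.lt_of_succ_lt h⟩ : Fin (2 * m + 1)) = ⟨_, hj⟩ := by
    ext; simp only [Fin.revPerm_apply, Fin.val_rev]; omega
  have e2 : Fin.revPerm (⟨i + 1, h⟩ : Fin (2 * m + 1)) = ⟨_, Nat.lt_of_succ_lt hj⟩ := by
    ext; simp only [Fin.revPerm_apply, Fin.val_rev]; omega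
  simp only [Equiv.Perm.mul_apply, e1, e2]
  split_ifs at key ⊢ <;> first | exact key | omega

lemma upDown_mul_revPerm_iff {n : ℕ} (hn : Odd n) {w : Equiv.Perm (Fin n)} :
    UpDown (w * Fin.revPerm) ↔ UpDown w := by
  refine ⟨fun h => ?_, UpDown.mul_revPerm hn⟩
  simpa [mul_assoc, Fin.revPerm_mul_self] using h.mul_revPerm hn

theorem stmt16_general (m : ℕ) :
    Nat.card {w : Equiv.Perm (Fin (2 * m + 1)) // UpDown w ∧ (occ123 w).ncard = 1} =
      Nat.card {w : Equiv.Perm (Fin (2 * m + 1)) // UpDown w ∧ (occ321 w).ncard = 1} := by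
  refine Nat.card_congr (Equiv.subtypeEquiv (Equiv.mulRight Fin.revPerm) fun w => ?_)
  have hrev : w * Fin.revPerm * Fin.revPerm = w := by simp [mul_assoc, Fin.revPerm_mul_self]
  rw [Equiv.coe_mulRight, upDown_mul_revPerm_iff (odd_two_mul_add_one m),
    ← ncard_occ123_mul_revPerm, hrev]

theorem stmt16 (m : ℕ) (hm : 1 ≤ m) :
    Nat.card {w : Equiv.Perm (Fin (2 * m + 1)) // UpDown w ∧ (occ123 w).ncard = 1} =
      Nat.card {w : Equiv.Perm (Fin (2 * m + 1)) // UpDown w ∧ (occ321 w).ncard = 1} :=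
  stmt16_general m
end

section
/- Suppose a permutation w of {1,...,n} contains exactly one occurrence of the pattern 321, realized at positions i < j < k (so w_i > w_j > w_k). Then every entry preceding position j other than w_i is less than w_j, and every entry following position j other than w_k is greater than w_j. -/
section

variable {n : ℕ} {w : Equiv.Perm (Fin n)} {i j k : Fin n}

/-- Any `l < j` with `w j < w l` would give a second occurrence `(l, j, k)`. -/
theorem lt_apply_of_lt_of_occ321_eq_singleton (hjk : j < k) (hwjk : w k < w j)
    (huniq : occ321 w = {(i, j, k)}) {l : Fin n} (hl : l < j) (hli : l ≠ i) :
    w l < w j := by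
  refine (lt_or_gt_of_ne (w.injective.ne hl.ne)).resolve_right fun hlt => hli ?_
  have hmem : (l, j, k) ∈ occ321 w := ⟨hl, hjk, hwjk, hlt⟩
  rw [huniq] at hmem
  exact congrArg Prod.fst hmem

/-- Any `l > j` with `w l < w j` would give a second occurrence `(i, j, l)`. -/
theorem apply_lt_of_lt_of_occ321_eq_singleton (hij : i < j) (hwij : w j < w i)
    (huniq : occ321 w = {(i, j, k)}) {l : Fin n} (hl : j < l) (hlk : l ≠ k) :
    w j < w l := by
  refine (lt_or_gt_of_ne (w.injective.ne hl.ne')).resolve_left fun hlt => hlk ?_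
  have hmem : (i, j, l) ∈ occ321 w := ⟨hij, hl, hlt, hwij⟩
  rw [huniq] at hmem
  exact congrArg (·.2.2) hmem

end

theorem stmt18 (n : ℕ) (w : Equiv.Perm (Fin n)) (i j k : Fin n)
    (hij : i < j) (hjk : j < k) (h1 : w j < w i) (h2 : w k < w j)
    (huniq : occ321 w = {(i, j, k)}) :
    (∀ l : Fin n, l < j → l ≠ i → w l < w j) ∧
    (∀ l : Fin n, j < l → l ≠ k → w j < w l) :=
  ⟨fun _ hl hli => lt_apply_of_lt_of_occ321_eq_singleton hjk h2 huniq hl hli,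
    fun _ hl hlk => apply_lt_of_lt_of_occ321_eq_singleton hij h1 huniq hl hlk⟩
end

section
/- Suppose a permutation w of {1,...,n} contains exactly one occurrence of the pattern 321, at positions i < j < k. Then the sequences u = (w_1, ..., w_{j-1}, w_k) and v = (w_i, w_{j+1}, ..., w_n) are each order-isomorphic to 321-avoiding permutations. -/
/-!
A decreasing subsequence of length three in the values of `w` along increasing positions is an
occurrence of 321. Since the only occurrence has its middle entry at position `j`, no such
subsequence exists along any increasing list of positions avoiding `j`; both `u` and `v` are read
off such lists (`u` along the positions `< j` followed by `k`, `v` along `i` followed by the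
positions `> j`).
-/

lemma exists_occ321_of_sublist_map {n : ℕ} (w : Equiv.Perm (Fin n)) {L s : List (Fin n)}
    (hL : L.Pairwise (· < ·)) (hs : s.Sublist (L.map w)) (hdec : s.Pairwise (· > ·))
    (hlen : 3 ≤ s.length) : ∃ t ∈ occ321 w, t.2.1 ∈ L := by
  obtain ⟨a, b, c, rest, rfl⟩ : ∃ a b c rest, s = a :: b :: c :: rest := by
    match s, hlen with
    | a :: b :: c :: rest, _ => exact ⟨a, b, c, rest, rfl⟩
  have habc : [a, b, c].Sublist (L.map w) := (List.sublist_append_left [a, b, c] rest).trans hs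
  obtain ⟨l', hl'L, hl'⟩ := List.sublist_map_iff.mp habc
  obtain ⟨p, q, r, rfl, rfl, rfl, rfl⟩ : ∃ p q r, l' = [p, q, r] ∧ w p = a ∧ w q = b ∧ w r = c := by
    match l', hl' with
    | [p, q, r], h => simp only [List.map_cons, List.map_nil, List.cons.injEq] at h; grind
  have hpqr : [p, q, r].Pairwise (· < ·) := hL.sublist hl'L
  simp only [List.pairwise_cons, List.mem_cons, List.not_mem_nil, forall_eq_or_imp] at hpqr hdec
  exact ⟨(p, q, r), ⟨hpqr.1.1, hpqr.2.1.1, hdec.2.1.1, hdec.1.1⟩,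
    hl'L.mem (by simp)⟩

lemma length_le_two_of_sublist_map {n : ℕ} (w : Equiv.Perm (Fin n)) {i j k : Fin n}
    (huniq : occ321 w = {(i, j, k)}) {L s : List (Fin n)} (hL : L.Pairwise (· < ·))
    (hj : j ∉ L) (hs : s.Sublist (L.map w)) (hdec : s.Pairwise (· > ·)) : s.length ≤ 2 := by
  by_contra! hlen
  obtain ⟨t, ht, htL⟩ := exists_occ321_of_sublist_map w hL hs hdec hlen
  rw [huniq, Set.mem_singleton_iff] at ht
  subst ht
  exact hj htL

theorem stmt19_general (n : ℕ) (w : Equiv.Perm (Fin n)) (i j k : Fin n)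
    (hij : i < j) (hjk : j < k)
    (huniq : occ321 w = {(i, j, k)}) :
    (∀ s : List (Fin n),
        s.Sublist (((List.finRange n).filter (fun x => x < j)).map w ++ [w k]) →
        s.Pairwise (· > ·) → s.length ≤ 2) ∧
    (∀ s : List (Fin n),
        s.Sublist (w i :: ((List.finRange n).filter (fun x => j < x)).map w) →
        s.Pairwise (· > ·) → s.length ≤ 2) := by
  have hsorted (p : Fin n → Prop) [DecidablePred p] :
      ((List.finRange n).filter (fun x => p x)).Pairwise (· < ·) :=
    (List.pairwise_lt_finRange n).filter _
  constructor
  · intro s hs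
    refine length_le_two_of_sublist_map w huniq (L := (List.finRange n).filter (· < j) ++ [k])
      ?_ (by simpa using hjk.ne) (by simpa using hs)
    refine List.pairwise_append.mpr ⟨hsorted _, by simp, ?_⟩
    simp only [List.mem_filter, List.mem_finRange, decide_eq_true_eq, true_and,
      List.mem_singleton]
    rintro a ha _ rfl
    exact ha.trans hjk
  · intro s hs
    refine length_le_two_of_sublist_map w huniq (L := i :: (List.finRange n).filter (j < ·))
      ?_ (by simpa using hij.ne') (by simpa using hs)
    refine List.pairwise_cons.mpr ⟨?_, hsorted _⟩
    simp only [List.mem_filter, List.mem_finRange, decide_eq_true_eq, true_and]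
    exact fun a ha => hij.trans ha

theorem stmt19 (n : ℕ) (w : Equiv.Perm (Fin n)) (i j k : Fin n)
    (hij : i < j) (hjk : j < k) (h1 : w j < w i) (h2 : w k < w j)
    (huniq : occ321 w = {(i, j, k)}) :
    (∀ s : List (Fin n),
        s.Sublist (((List.finRange n).filter (fun x => x < j)).map w ++ [w k]) →
        s.Pairwise (· > ·) → s.length ≤ 2) ∧
    (∀ s : List (Fin n),
        s.Sublist (w i :: ((List.finRange n).filter (fun x => j < x)).map w) →
        s.Pairwise (· > ·) → s.length ≤ 2) :=
  stmt19_general n w i j k hij hjk huniq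
end
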